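/- Let α > −1 and n ∈ ℕ, and suppose L_{n+1}^{(α+1)} and L_n^{(α)} have no common zeros. Let 0 < z_1 < ⋯ < z_{n+1} be the zeros of L_{n+1}^{(α+1)}, 0 < x_1 < ⋯ < x_n the zeros of L_n^{(α)}, and 0 < y_1 < ⋯ < y_{n+1} the zeros of L_{n+1}^{(α)}. If the point n+1 lies in the open interval (z_j, z_{j+1}) for some j ∈ {1, …, n}, then the smallest zeros satisfy 0 < y_1 < x_1 < z_1 < y_2. -/

import Mathlib

open Polynomial

/-- The generalized Laguerre polynomial `L_n^{(α)}(x) =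
∑_{k=0}^{n} (−1)^k [∏_{j=k+1}^{n}(α+j)] / ((n−k)!·k!) · x^k`. -/
noncomputable def laguerre (α : ℝ) (n : ℕ) : Polynomial ℝ :=
  ∑ k ∈ Finset.range (n + 1),
    Polynomial.C ((-1 : ℝ) ^ k * (∏ j ∈ Finset.Icc (k + 1) n, (α + (j : ℝ))) /
      ((n - k).factorial * k.factorial)) * Polynomial.X ^ k

/-!
Write `P = L_{n+1}^{(α+1)}`, `A = L_n^{(α)}` and `Q = L_{n+1}^{(α)}`. Two classical identities
drive the argument: `P = Q - Q'` and `x P = (α + n + 1) A + (x - n - 1) Q`.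
Since `Q = ∏ (y_i - x) / (n+1)!`, left of `y_1` we have `Q > 0` and `Q' ≤ 0`, hence `P > 0`, while
`P(y_1) = 0` would give `A(y_1) = 0` by the second identity; so `y_1 < z_1`. Rolle's theorem for
`e^{-x} Q`, whose derivative is `-e^{-x} P`, puts a zero of `P` in `(y_1, y_2)`, so `z_1 < y_2`.
At `z_1 < n + 1` the second identity turns `Q(z_1) < 0` into `A(z_1) < 0`, so `x_1 < z_1`; at
`x_1` it reads `x_1 P(x_1) = (x_1 - n - 1) Q(x_1)` with `P(x_1) > 0`, which forces `Q(x_1) < 0`,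
i.e. `y_1 < x_1`.
-/

open Finset
open scoped Nat

theorem Polynomial.eq_C_leadingCoeff_mul_prod_X_sub_C {R ι : Type*} [CommRing R] [IsDomain R]
    {p : R[X]} {s : Finset ι} {r : ι → R} (hr : Set.InjOn r s) (hdeg : p.natDegree ≤ #s)
    (hroot : ∀ i ∈ s, p.IsRoot (r i)) :
    p = C p.leadingCoeff * ∏ i ∈ s, (X - C (r i)) := by
  rcases eq_or_ne p 0 with rfl | hp
  · simp
  have hle : s.val.map r ≤ p.roots :=
    (Multiset.le_iff_subset (s.nodup.map_on fun i hi j hj => hr hi hj)).2 fun a ha => by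
      obtain ⟨i, hi, rfl⟩ := Multiset.mem_map.1 ha
      exact (mem_roots hp).2 (hroot i hi)
  refine eq_leadingCoeff_mul_of_monic_of_dvd_of_natDegree_le
    (monic_prod_of_monic _ _ fun i _ => monic_X_sub_C (r i)) ?_ (by simpa using hdeg)
  have := (Multiset.prod_X_sub_C_dvd_iff_le_roots hp _).2 hle
  rwa [Multiset.map_map, Function.comp_def, ← Finset.prod_eq_multiset_prod] at this

theorem Polynomial.eval_derivative_prod_C_sub_X_nonpos {ι : Type*} {s : Finset ι} {r : ι → ℝ}
    {t : ℝ} (ht : ∀ i ∈ s, t ≤ r i) : (derivative (∏ i ∈ s, (C (r i) - X))).eval t ≤ 0 := by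
  classical
  rw [derivative_prod_finset, eval_finsetSum]
  refine sum_nonpos fun i _ => ?_
  simp only [derivative_sub, derivative_C, derivative_X, zero_sub, eval_neg,
    eval_prod, eval_sub, eval_C, eval_X, mul_neg_one, neg_nonpos]
  exact prod_nonneg fun j hj => sub_nonneg.2 (ht j (mem_of_mem_erase hj))

theorem Polynomial.exists_mem_Ioo_eval_derivative_eq_eval {p : ℝ[X]} {a b : ℝ} (hab : a < b)
    (ha : p.eval a = 0) (hb : p.eval b = 0) :
    ∃ c ∈ Set.Ioo a b, p.derivative.eval c = p.eval c := by
  have hderiv (t : ℝ) : HasDerivAt (fun s => Real.exp (-s) * p.eval s)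
      (Real.exp (-t) * (p.derivative.eval t - p.eval t)) t :=
    ((hasDerivAt_neg t).exp.mul (p.hasDerivAt t)).congr_deriv (by ring)
  obtain ⟨c, hc, hc0⟩ := exists_hasDerivAt_eq_zero hab
    (by fun_prop) (by simp [ha, hb]) fun t _ => hderiv t
  exact ⟨c, hc, by simpa [Real.exp_ne_zero, sub_eq_zero] using hc0⟩

theorem coeff_laguerre (α : ℝ) (n k : ℕ) :
    (laguerre α n).coeff k = if k ≤ n then
      (-1) ^ k * (∏ j ∈ Icc (k + 1) n, (α + j)) / ((n - k)! * k !) else 0 := by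
  simp [laguerre, finsetSum_coeff, coeff_X_pow]

theorem coeff_laguerre_of_lt {α : ℝ} {n k : ℕ} (h : n < k) : (laguerre α n).coeff k = 0 := by
  simp [coeff_laguerre, h.not_ge]

-- Indexing the degree as `k + m` avoids the truncated subtraction `n - k`.
theorem coeff_laguerre_add (α : ℝ) (k m : ℕ) :
    (laguerre α (k + m)).coeff k = (-1) ^ k * (∏ i ∈ range m, (α + (k + 1) + i)) / (m ! * k !) := by
  rw [coeff_laguerre, if_pos (Nat.le_add_right k m), Nat.add_sub_cancel_left,
    ← Ico_add_one_right_eq_Icc, prod_Ico_eq_prod_range, show k + m + 1 - (k + 1) = m by omega]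
  push_cast
  simp only [add_assoc]

theorem coeff_laguerre_self (α : ℝ) (n : ℕ) : (laguerre α n).coeff n = (-1) ^ n / n ! := by
  simpa using coeff_laguerre_add α n 0

theorem natDegree_laguerre (α : ℝ) (n : ℕ) : (laguerre α n).natDegree = n :=
  natDegree_eq_of_le_of_coeff_ne_zero
    ((natDegree_le_iff_coeff_eq_zero).2 fun _ hk => coeff_laguerre_of_lt (by exact_mod_cast hk))
    (by simp [coeff_laguerre_self, Nat.factorial_ne_zero])

theorem leadingCoeff_laguerre (α : ℝ) (n : ℕ) : (laguerre α n).leadingCoeff = (-1) ^ n / n ! := by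
  rw [leadingCoeff, natDegree_laguerre, coeff_laguerre_self]

theorem laguerre_add_one_succ (α : ℝ) (n : ℕ) :
    laguerre (α + 1) (n + 1) = laguerre α (n + 1) + laguerre (α + 1) n := by
  ext k
  rw [coeff_add]
  rcases lt_trichotomy k (n + 1) with hk | rfl | hk
  · obtain ⟨m, rfl⟩ := Nat.exists_eq_add_of_le (Nat.le_of_lt_succ hk)
    rw [add_assoc, coeff_laguerre_add, coeff_laguerre_add, coeff_laguerre_add, prod_range_succ,
      prod_range_succ', Nat.factorial_succ]
    push_cast
    ring_nf
    field_simp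
    ring
  · rw [coeff_laguerre_self, coeff_laguerre_self, coeff_laguerre_of_lt (Nat.lt_succ_self n),
      add_zero]
  · rw [coeff_laguerre_of_lt hk, coeff_laguerre_of_lt hk, coeff_laguerre_of_lt (by omega),
      add_zero]

theorem derivative_laguerre_succ (α : ℝ) (n : ℕ) :
    derivative (laguerre α (n + 1)) = -laguerre (α + 1) n := by
  ext k
  rw [coeff_derivative, coeff_neg]
  rcases le_or_gt k n with hk | hk
  · obtain ⟨m, rfl⟩ := Nat.exists_eq_add_of_le hk
    rw [show k + m + 1 = k + 1 + m by omega, coeff_laguerre_add, coeff_laguerre_add,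
      Nat.factorial_succ]
    push_cast
    field_simp
    ring_nf
  · rw [coeff_laguerre_of_lt (by omega), coeff_laguerre_of_lt hk]
    simp

theorem X_mul_laguerre_add_one (α : ℝ) (n : ℕ) :
    X * laguerre (α + 1) n = C (α + n + 1) * laguerre α n - C (n + 1 : ℝ) * laguerre α (n + 1) := by
  ext k
  rw [coeff_sub, coeff_C_mul, coeff_C_mul]
  rcases k with _ | k
  · have h := coeff_laguerre_add α 0 n
    have h' := coeff_laguerre_add α 0 (n + 1)
    rw [zero_add] at h h'
    rw [coeff_X_mul_zero, h, h', prod_range_succ, Nat.factorial_succ]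
    push_cast
    field_simp
    ring
  rw [coeff_X_mul]
  rcases lt_trichotomy k n with hk | rfl | hk
  · obtain ⟨m, rfl⟩ := Nat.exists_eq_add_of_le (Nat.succ_le_of_lt hk)
    rw [show k + 1 + m = k + (m + 1) by omega, coeff_laguerre_add,
      show k + (m + 1) = k + 1 + m by omega, coeff_laguerre_add, add_assoc (k + 1),
      coeff_laguerre_add, prod_range_succ, prod_range_succ, Nat.factorial_succ m,
      Nat.factorial_succ k]
    push_cast
    ring_nf
    field_simp
    ring
  · rw [coeff_laguerre_self, coeff_laguerre_self, coeff_laguerre_of_lt (Nat.lt_succ_self k),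
      Nat.factorial_succ]
    push_cast
    field_simp
    ring
  · rw [coeff_laguerre_of_lt hk, coeff_laguerre_of_lt (by omega), coeff_laguerre_of_lt (by omega)]
    ring

theorem eval_derivative_laguerre_succ (α : ℝ) (n : ℕ) (t : ℝ) :
    (derivative (laguerre α (n + 1))).eval t =
      (laguerre α (n + 1)).eval t - (laguerre (α + 1) (n + 1)).eval t := by
  rw [laguerre_add_one_succ, derivative_laguerre_succ]
  simp

theorem mul_eval_laguerre_add_one_succ (α : ℝ) (n : ℕ) (t : ℝ) :
    t * (laguerre (α + 1) (n + 1)).eval t =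
      (α + n + 1) * (laguerre α n).eval t + (t - (n + 1)) * (laguerre α (n + 1)).eval t := by
  have h := congrArg (eval t) (X_mul_laguerre_add_one α n)
  simp only [eval_mul, eval_sub, eval_X, eval_C] at h
  rw [laguerre_add_one_succ, eval_add, mul_add, h]
  ring

def IsOrderedZeros (p : ℝ[X]) (m : ℕ) (r : ℕ → ℝ) : Prop :=
  StrictMonoOn r (Icc 1 m : Set ℕ) ∧ ∀ t, p.eval t = 0 ↔ ∃ i ∈ Icc 1 m, r i = t

namespace IsOrderedZeros

variable {p : ℝ[X]} {β t : ℝ} {m : ℕ} {r : ℕ → ℝ}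

theorem eval_eq_zero (h : IsOrderedZeros p m r) {i : ℕ} (hi : i ∈ Icc 1 m) : p.eval (r i) = 0 :=
  (h.2 _).2 ⟨i, hi, rfl⟩

theorem first_le (h : IsOrderedZeros p m r) {i : ℕ} (hi : i ∈ Icc 1 m) : r 1 ≤ r i :=
  h.1.monotoneOn (by simp [(mem_Icc.1 hi).1.trans (mem_Icc.1 hi).2]) hi (mem_Icc.1 hi).1

theorem first_le_of_eval_eq_zero (h : IsOrderedZeros p m r) (ht : p.eval t = 0) : r 1 ≤ t := by
  obtain ⟨i, hi, rfl⟩ := (h.2 t).1 ht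
  exact h.first_le hi

theorem laguerre_eq (h : IsOrderedZeros (laguerre β m) m r) :
    laguerre β m = C (m ! : ℝ)⁻¹ * ∏ i ∈ Icc 1 m, (C (r i) - X) := by
  conv_lhs => rw [eq_C_leadingCoeff_mul_prod_X_sub_C (s := Icc 1 m) h.1.injOn
    (by simp [natDegree_laguerre]) fun i hi => h.eval_eq_zero hi]
  have hneg : ∏ i ∈ Icc 1 m, (C (r i) - X) = (-1) ^ m * ∏ i ∈ Icc 1 m, (X - C (r i)) :=
    calc ∏ i ∈ Icc 1 m, (C (r i) - X) = ∏ i ∈ Icc 1 m, -(X - C (r i)) :=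
          prod_congr rfl fun i _ => (neg_sub _ _).symm
      _ = (-1) ^ #(Icc 1 m) * ∏ i ∈ Icc 1 m, (X - C (r i)) := prod_neg _
      _ = _ := by rw [Nat.card_Icc, Nat.add_sub_cancel]
  rw [hneg, leadingCoeff_laguerre, div_eq_mul_inv, C_mul, C_pow, C_neg, C_1]
  ring

theorem eval_laguerre (h : IsOrderedZeros (laguerre β m) m r) (t : ℝ) :
    (laguerre β m).eval t = (∏ i ∈ Icc 1 m, (r i - t)) / m ! := by
  rw [h.laguerre_eq]
  simp [eval_prod, div_eq_inv_mul]

theorem laguerre_eval_pos (h : IsOrderedZeros (laguerre β m) m r) (ht : t < r 1) :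
    0 < (laguerre β m).eval t := by
  rw [h.eval_laguerre]
  exact div_pos (prod_pos fun i hi => sub_pos.2 (ht.trans_le (h.first_le hi))) (by positivity)

theorem laguerre_eval_nonneg (h : IsOrderedZeros (laguerre β m) m r) (ht : t ≤ r 1) :
    0 ≤ (laguerre β m).eval t := by
  rw [h.eval_laguerre]
  exact div_nonneg (prod_nonneg fun i hi => sub_nonneg.2 (ht.trans (h.first_le hi))) (by positivity)

theorem laguerre_eval_neg (h : IsOrderedZeros (laguerre β m) m r) (hm : 1 ≤ m) (h1 : r 1 < t)
    (h2 : t < r 2) : (laguerre β m).eval t < 0 := by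
  rw [h.eval_laguerre, ← mul_prod_erase _ _ (mem_Icc.2 ⟨le_rfl, hm⟩)]
  refine div_neg_of_neg_of_pos (mul_neg_of_neg_of_pos (sub_neg.2 h1) (prod_pos fun i hi => ?_))
    (by positivity)
  obtain ⟨hne, hi⟩ := mem_erase.1 hi
  have h2i : 2 ≤ i := by have := (mem_Icc.1 hi).1; omega
  exact sub_pos.2 (h2.trans_le (h.1.monotoneOn (by simp [h2i.trans (mem_Icc.1 hi).2]) hi h2i))

theorem laguerre_eval_derivative_nonpos (h : IsOrderedZeros (laguerre β m) m r) (ht : t ≤ r 1) :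
    (derivative (laguerre β m)).eval t ≤ 0 := by
  rw [h.laguerre_eq, derivative_C_mul, eval_mul, eval_C]
  exact mul_nonpos_of_nonneg_of_nonpos (by positivity)
    (eval_derivative_prod_C_sub_X_nonpos fun i hi => ht.trans (h.first_le hi))

end IsOrderedZeros

section SmallestZeros

variable {α : ℝ} {n : ℕ} {x y z : ℕ → ℝ}

theorem laguerre_add_one_succ_eval_pos (hy : IsOrderedZeros (laguerre α (n + 1)) (n + 1) y)
    {t : ℝ} (ht : t < y 1) : 0 < (laguerre (α + 1) (n + 1)).eval t := by
  have hQ := hy.laguerre_eval_pos ht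
  have hQ' := hy.laguerre_eval_derivative_nonpos ht.le
  rw [eval_derivative_laguerre_succ] at hQ'
  linarith

theorem first_zero_laguerre_succ_lt_first_zero_laguerre_add_one_succ (hα : 0 < α + n + 1)
    (hnc : ∀ t : ℝ, ¬((laguerre (α + 1) (n + 1)).eval t = 0 ∧ (laguerre α n).eval t = 0))
    (hz : IsOrderedZeros (laguerre (α + 1) (n + 1)) (n + 1) z)
    (hy : IsOrderedZeros (laguerre α (n + 1)) (n + 1) y) : y 1 < z 1 := by
  have hz1 := hz.eval_eq_zero (i := 1) (by simp)
  rcases lt_trichotomy (y 1) (z 1) with h | h | h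
  · exact h
  · rw [← h] at hz1
    refine absurd ⟨hz1, ?_⟩ (hnc (y 1))
    have := mul_eval_laguerre_add_one_succ α n (y 1)
    rw [hz1, hy.eval_eq_zero (by simp)] at this
    simpa [hα.ne'] using this.symm
  · exact absurd hz1 (laguerre_add_one_succ_eval_pos hy h).ne'

theorem first_zero_laguerre_add_one_succ_lt_second_zero_laguerre_succ (hn : 1 ≤ n)
    (hz : IsOrderedZeros (laguerre (α + 1) (n + 1)) (n + 1) z)
    (hy : IsOrderedZeros (laguerre α (n + 1)) (n + 1) y) : z 1 < y 2 := by
  obtain ⟨c, hc, hc'⟩ := exists_mem_Ioo_eval_derivative_eq_eval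
    (hy.1 (by simp) (by simp; omega) one_lt_two) (hy.eval_eq_zero (by simp))
    (hy.eval_eq_zero (by simp; omega))
  rw [eval_derivative_laguerre_succ, sub_eq_self] at hc'
  exact (hz.first_le_of_eval_eq_zero hc').trans_lt hc.2

theorem first_zero_laguerre_lt_first_zero_laguerre_add_one_succ (hα : 0 < α + n + 1)
    (hz : IsOrderedZeros (laguerre (α + 1) (n + 1)) (n + 1) z)
    (hx : IsOrderedZeros (laguerre α n) n x) (hy : IsOrderedZeros (laguerre α (n + 1)) (n + 1) y)
    (hyz : y 1 < z 1) (hzy : z 1 < y 2) (hz1 : z 1 < n + 1) : x 1 < z 1 := by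
  have hA : (α + n + 1) * (laguerre α n).eval (z 1) < 0 := by
    have := mul_eval_laguerre_add_one_succ α n (z 1)
    rw [hz.eval_eq_zero (by simp)] at this
    nlinarith [hy.laguerre_eval_neg (by omega) hyz hzy]
  by_contra! h
  nlinarith [hx.laguerre_eval_nonneg h]

theorem first_zero_laguerre_succ_lt_first_zero_laguerre (hn : 1 ≤ n)
    (hz : IsOrderedZeros (laguerre (α + 1) (n + 1)) (n + 1) z)
    (hx : IsOrderedZeros (laguerre α n) n x) (hy : IsOrderedZeros (laguerre α (n + 1)) (n + 1) y)
    (hx1 : 0 < x 1) (hxz : x 1 < z 1) (hz1 : z 1 < n + 1) : y 1 < x 1 := by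
  by_contra! h
  have := mul_eval_laguerre_add_one_succ α n (x 1)
  rw [hx.eval_eq_zero (by simp; omega)] at this
  nlinarith [hz.laguerre_eval_pos hxz, hy.laguerre_eval_nonneg h]

end SmallestZeros

theorem laguerre_smallest_zeros_order_of_case_two_general
    (α : ℝ) (hα : -1 < α) (n : ℕ)
    (hnc : ∀ t : ℝ, ¬((laguerre (α + 1) (n + 1)).eval t = 0 ∧ (laguerre α n).eval t = 0))
    (z : ℕ → ℝ)
    (hzmono : ∀ i ∈ Finset.Icc 1 (n + 1), ∀ j ∈ Finset.Icc 1 (n + 1), i < j → z i < z j)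
    (hzroots : ∀ t : ℝ, (laguerre (α + 1) (n + 1)).eval t = 0 ↔ ∃ i ∈ Finset.Icc 1 (n + 1), z i = t)
    (x : ℕ → ℝ)
    (hxpos : ∀ i ∈ Finset.Icc 1 n, 0 < x i)
    (hxmono : ∀ i ∈ Finset.Icc 1 n, ∀ j ∈ Finset.Icc 1 n, i < j → x i < x j)
    (hxroots : ∀ t : ℝ, (laguerre α n).eval t = 0 ↔ ∃ i ∈ Finset.Icc 1 n, x i = t)
    (y : ℕ → ℝ)
    (hypos : ∀ i ∈ Finset.Icc 1 (n + 1), 0 < y i)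
    (hymono : ∀ i ∈ Finset.Icc 1 (n + 1), ∀ j ∈ Finset.Icc 1 (n + 1), i < j → y i < y j)
    (hyroots : ∀ t : ℝ, (laguerre α (n + 1)).eval t = 0 ↔ ∃ i ∈ Finset.Icc 1 (n + 1), y i = t)
    (hpt : ∃ j ∈ Finset.Icc 1 n, ((n : ℝ) + 1) ∈ Set.Ioo (z j) (z (j + 1))) :
    0 < y 1 ∧ y 1 < x 1 ∧ x 1 < z 1 ∧ z 1 < y 2 := by
  obtain ⟨j, hj, hzj, -⟩ := hpt
  have hn : 1 ≤ n := (mem_Icc.1 hj).1.trans (mem_Icc.1 hj).2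
  have hα' : 0 < α + n + 1 := by linarith [(n.cast_nonneg : (0 : ℝ) ≤ n)]
  have hz : IsOrderedZeros _ _ z := ⟨fun i hi k hk => hzmono i hi k hk, hzroots⟩
  have hx : IsOrderedZeros _ _ x := ⟨fun i hi k hk => hxmono i hi k hk, hxroots⟩
  have hy : IsOrderedZeros _ _ y := ⟨fun i hi k hk => hymono i hi k hk, hyroots⟩
  have hz1 : z 1 < n + 1 := (hz.first_le (by simp at hj ⊢; omega)).trans_lt hzj
  have hyz := first_zero_laguerre_succ_lt_first_zero_laguerre_add_one_succ hα' hnc hz hy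
  have hzy := first_zero_laguerre_add_one_succ_lt_second_zero_laguerre_succ hn hz hy
  have hxz := first_zero_laguerre_lt_first_zero_laguerre_add_one_succ hα' hz hx hy hyz hzy hz1
  have hyx := first_zero_laguerre_succ_lt_first_zero_laguerre hn hz hx hy
    (hxpos 1 (by simpa)) hxz hz1
  exact ⟨hypos 1 (by simp), hyx, hxz, hzy⟩

theorem laguerre_smallest_zeros_order_of_case_two
    (α : ℝ) (hα : -1 < α) (n : ℕ)
    (hnc : ∀ t : ℝ, ¬((laguerre (α + 1) (n + 1)).eval t = 0 ∧ (laguerre α n).eval t = 0))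
    (z : ℕ → ℝ)
    (hzpos : ∀ i ∈ Finset.Icc 1 (n + 1), 0 < z i)
    (hzmono : ∀ i ∈ Finset.Icc 1 (n + 1), ∀ j ∈ Finset.Icc 1 (n + 1), i < j → z i < z j)
    (hzroots : ∀ t : ℝ, (laguerre (α + 1) (n + 1)).eval t = 0 ↔ ∃ i ∈ Finset.Icc 1 (n + 1), z i = t)
    (x : ℕ → ℝ)
    (hxpos : ∀ i ∈ Finset.Icc 1 n, 0 < x i)
    (hxmono : ∀ i ∈ Finset.Icc 1 n, ∀ j ∈ Finset.Icc 1 n, i < j → x i < x j)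
    (hxroots : ∀ t : ℝ, (laguerre α n).eval t = 0 ↔ ∃ i ∈ Finset.Icc 1 n, x i = t)
    (y : ℕ → ℝ)
    (hypos : ∀ i ∈ Finset.Icc 1 (n + 1), 0 < y i)
    (hymono : ∀ i ∈ Finset.Icc 1 (n + 1), ∀ j ∈ Finset.Icc 1 (n + 1), i < j → y i < y j)
    (hyroots : ∀ t : ℝ, (laguerre α (n + 1)).eval t = 0 ↔ ∃ i ∈ Finset.Icc 1 (n + 1), y i = t)
    (hpt : ∃ j ∈ Finset.Icc 1 n, ((n : ℝ) + 1) ∈ Set.Ioo (z j) (z (j + 1))) :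
    0 < y 1 ∧ y 1 < x 1 ∧ x 1 < z 1 ∧ z 1 < y 2 :=
  laguerre_smallest_zeros_order_of_case_two_general α hα n hnc z hzmono hzroots x hxpos hxmono
    hxroots y hypos hymono hyroots hpt
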